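/- arXiv:1911.10642 — 3 statements merged into one kernel-verified Lean document; each statement's English description precedes it below -/
import Mathlib

section
/- Let (M,d) be a finite metric space with n+1 elements and G its canonical graph. A subset E' of the edges of G has the property that the molecules {m_e : e ∈ E'} form a basis of ℝ^n if and only if the subgraph (M, E') is a spanning tree of G. -/
/-!
Write `v i := stdVec n i`, so that `v 0 = 0` and `v 1, …, v n` is the standard basis; every
molecule `m_{ij}` is a nonzero multiple of `v i - v j`. Telescoping along walks shows that the
molecules span `ℝⁿ` iff every `v i = v i - v 0` lies in their span iff the graph is connected
(for a disconnected graph, the functional equal to `1` on the `v i` away from the component of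
`0` kills every molecule). A spanning family is a basis iff it has exactly `n` members, and a
connected graph on `n + 1` vertices is a tree iff it has exactly `n` edges.
-/

noncomputable def stdVec (n : ℕ) (i : Fin (n + 1)) : Fin n → ℝ :=
  fun j => if (j : ℕ) + 1 = (i : ℕ) then 1 else 0

noncomputable def molecule (n : ℕ) (d : Fin (n + 1) → Fin (n + 1) → ℝ)
    (i j : Fin (n + 1)) : Fin n → ℝ :=
  (d i j)⁻¹ • (stdVec n i - stdVec n j)

open SimpleGraph Submodule Set Module

lemma SimpleGraph.Connected.isAcyclic_iff_natCard_edgeSet {V : Type*} [Finite V]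
    {G : SimpleGraph V} (hG : G.Connected) :
    G.IsAcyclic ↔ Nat.card G.edgeSet + 1 = Nat.card V :=
  ⟨fun h => (isTree_iff_connected_and_card.mp ⟨hG, h⟩).2,
    fun h => (isTree_iff_connected_and_card.mpr ⟨hG, h⟩).isAcyclic⟩

lemma SimpleGraph.natCard_edgeSet_fromRel_mem {V : Type*} (P : Finset (V × V))
    (hPne : ∀ p ∈ P, p.1 ≠ p.2) (hPswap : ∀ p ∈ P, Prod.swap p ∉ P) :
    Nat.card (fromRel fun i j => (i, j) ∈ P).edgeSet = P.card := by
  have hedges :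
      (fromRel fun i j => (i, j) ∈ P).edgeSet = (fun p : V × V => s(p.1, p.2)) '' P := by
    ext ⟨a, b⟩
    simp only [mem_edgeSet, fromRel_adj, mem_image, Finset.mem_coe, Sym2.eq_iff]
    constructor
    · rintro ⟨-, h | h⟩
      · exact ⟨(a, b), h, Or.inl ⟨rfl, rfl⟩⟩
      · exact ⟨(b, a), h, Or.inr ⟨rfl, rfl⟩⟩
    · rintro ⟨p, hp, ⟨rfl, rfl⟩ | ⟨rfl, rfl⟩⟩
      · exact ⟨hPne p hp, Or.inl hp⟩
      · exact ⟨(hPne p hp).symm, Or.inr hp⟩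
  have hinj : InjOn (fun p : V × V => s(p.1, p.2)) P := by
    rintro p hp q hq hpq
    rcases Sym2.mk_eq_mk_iff.mp hpq with rfl | rfl
    · rfl
    · exact absurd hp (hPswap q hq)
  rw [hedges, Nat.card_coe_set_eq, hinj.ncard_image, ncard_coe_finset]

lemma linearIndependent_iff_card_eq_finrank_of_span_eq_top {K V ι : Type*} [DivisionRing K]
    [AddCommGroup V] [Module K V] [Fintype ι] {b : ι → V} (hb : span K (range b) = ⊤) :
    LinearIndependent K b ↔ Fintype.card ι = finrank K V := by
  rw [linearIndependent_iff_card_eq_finrank_span, Set.finrank, hb, finrank_top]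

section molecules

variable {n : ℕ} {d : Fin (n + 1) → Fin (n + 1) → ℝ}
  {P : Finset (Fin (n + 1) × Fin (n + 1))}

lemma stdVec_zero : stdVec n 0 = 0 := by
  funext j
  simp [stdVec]

lemma stdVec_succ (j : Fin n) : stdVec n j.succ = Pi.single j 1 := by
  funext k
  simp only [stdVec, Fin.val_succ, add_left_inj, Pi.single_apply, ← Fin.ext_iff]

lemma span_range_stdVec : span ℝ (range (stdVec n)) = ⊤ := by
  refine eq_top_iff.mpr ((Pi.basisFun ℝ (Fin n)).span_eq.ge.trans (span_mono ?_))
  rintro _ ⟨j, rfl⟩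
  exact ⟨j.succ, by rw [stdVec_succ, Pi.basisFun_apply]⟩

lemma exists_linearMap_comp_stdVec (w : Fin (n + 1) → ℝ) (hw : w 0 = 0) :
    ∃ φ : (Fin n → ℝ) →ₗ[ℝ] ℝ, ∀ i, φ (stdVec n i) = w i := by
  refine ⟨(Pi.basisFun ℝ (Fin n)).constr ℝ fun j => w j.succ, Fin.cases ?_ fun j => ?_⟩
  · rw [stdVec_zero, map_zero, hw]
  · rw [stdVec_succ, ← Pi.basisFun_apply, Basis.constr_basis]

lemma stdVec_sub_mem_span_molecule {p : Fin (n + 1) × Fin (n + 1)} (hp : p ∈ P)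
    (hd : d p.1 p.2 ≠ 0) :
    stdVec n p.1 - stdVec n p.2 ∈ span ℝ (range fun q : P => molecule n d q.1.1 q.1.2) := by
  rw [← smul_inv_smul₀ hd (stdVec n p.1 - stdVec n p.2)]
  exact smul_mem _ _ (subset_span ⟨⟨p, hp⟩, rfl⟩)

lemma stdVec_sub_mem_span_molecule_of_reachable (hd : ∀ p ∈ P, d p.1 p.2 ≠ 0)
    {a b : Fin (n + 1)} (hab : (fromRel fun i j => (i, j) ∈ P).Reachable a b) :
    stdVec n a - stdVec n b ∈ span ℝ (range fun q : P => molecule n d q.1.1 q.1.2) := by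
  obtain ⟨w⟩ := hab
  induction w with
  | nil => simp
  | @cons a c b hadj _ ih =>
    rw [← sub_add_sub_cancel _ (stdVec n c)]
    refine add_mem ?_ ih
    rcases ((fromRel_adj _ a c).mp hadj).2 with h | h
    · exact stdVec_sub_mem_span_molecule h (hd _ h)
    · rw [← neg_sub]
      exact neg_mem (stdVec_sub_mem_span_molecule h (hd _ h))

lemma span_molecule_eq_top_of_connected (hd : ∀ p ∈ P, d p.1 p.2 ≠ 0)
    (hconn : (fromRel fun i j => (i, j) ∈ P).Connected) :
    span ℝ (range fun q : P => molecule n d q.1.1 q.1.2) = ⊤ := by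
  rw [eq_top_iff, ← span_range_stdVec, span_le]
  rintro _ ⟨i, rfl⟩
  simpa [stdVec_zero] using stdVec_sub_mem_span_molecule_of_reachable hd (hconn.preconnected i 0)

lemma connected_of_span_molecule_eq_top
    (hspan : span ℝ (range fun q : P => molecule n d q.1.1 q.1.2) = ⊤) :
    (fromRel fun i j => (i, j) ∈ P).Connected := by
  classical
  set G := fromRel fun i j => (i, j) ∈ P
  obtain ⟨φ, hφ⟩ := exists_linearMap_comp_stdVec (fun i => if G.Reachable 0 i then 0 else 1)
    (if_pos (Reachable.refl 0))
  have hker : span ℝ (range fun q : P => molecule n d q.1.1 q.1.2) ≤ LinearMap.ker φ := by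
    rw [span_le]
    rintro _ ⟨⟨p, hp⟩, rfl⟩
    have hreach : G.Reachable p.1 p.2 := by
      rcases eq_or_ne p.1 p.2 with h | h
      · rw [h]
      · exact ((fromRel_adj _ _ _).mpr ⟨h, Or.inl hp⟩).reachable
    have hsame : G.Reachable 0 p.1 ↔ G.Reachable 0 p.2 :=
      ⟨fun h => h.trans hreach, fun h => h.trans hreach.symm⟩
    simp [molecule, hφ, hsame]
  rw [hspan, top_le_iff] at hker
  refine (connected_iff_exists_forall_reachable _).mpr ⟨0, fun i => ?_⟩
  have hi : φ (stdVec n i) = 0 := by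
    rw [← LinearMap.mem_ker, hker]
    trivial
  by_contra h
  simp [hφ, h] at hi

end molecules

theorem stmt5_general (n : ℕ) (d : Fin (n + 1) → Fin (n + 1) → ℝ)
    (hpos : ∀ i j, i ≠ j → 0 < d i j)
    -- `P` is an oriented set of edges of the canonical graph of `(M, d)`
    (P : Finset (Fin (n + 1) × Fin (n + 1)))
    (hPne : ∀ p ∈ P, p.1 ≠ p.2)
    (hPswap : ∀ p ∈ P, Prod.swap p ∉ P) :
    (LinearIndependent ℝ (fun p : P => molecule n d p.1.1 p.1.2) ∧
        Submodule.span ℝ (Set.range (fun p : P => molecule n d p.1.1 p.1.2)) = ⊤) ↔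
      ((SimpleGraph.fromRel (fun i j => (i, j) ∈ P)).Connected ∧
        (SimpleGraph.fromRel (fun i j => (i, j) ∈ P)).IsAcyclic) := by
  have hd : ∀ p ∈ P, d p.1 p.2 ≠ 0 := fun p hp => (hpos _ _ (hPne p hp)).ne'
  have hcard : Nat.card (fromRel fun i j => (i, j) ∈ P).edgeSet + 1 = Nat.card (Fin (n + 1)) ↔
      Fintype.card P = finrank ℝ (Fin n → ℝ) := by
    rw [natCard_edgeSet_fromRel_mem P hPne hPswap, Nat.card_eq_fintype_card, Fintype.card_fin,
      Fintype.card_coe, finrank_fin_fun]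
    omega
  constructor
  · rintro ⟨hli, hspan⟩
    have hconn := connected_of_span_molecule_eq_top hspan
    exact ⟨hconn, hconn.isAcyclic_iff_natCard_edgeSet.mpr
      (hcard.mpr ((linearIndependent_iff_card_eq_finrank_of_span_eq_top hspan).mp hli))⟩
  · rintro ⟨hconn, hacyc⟩
    have hspan := span_molecule_eq_top_of_connected hd hconn
    exact ⟨(linearIndependent_iff_card_eq_finrank_of_span_eq_top hspan).mpr
      (hcard.mp (hconn.isAcyclic_iff_natCard_edgeSet.mp hacyc)), hspan⟩

theorem stmt5 (n : ℕ) (d : Fin (n + 1) → Fin (n + 1) → ℝ)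
    (hsymm : ∀ i j, d i j = d j i) (hzero : ∀ i, d i i = 0)
    (hpos : ∀ i j, i ≠ j → 0 < d i j)
    (htri : ∀ i j k, d i k ≤ d i j + d j k)
    -- `P` is an oriented set of edges of the canonical graph of `(M, d)`
    (P : Finset (Fin (n + 1) × Fin (n + 1)))
    (hPne : ∀ p ∈ P, p.1 ≠ p.2)
    (hPedge : ∀ p ∈ P, ∀ k, k ≠ p.1 → k ≠ p.2 → d p.1 p.2 < d p.1 k + d k p.2)
    (hPswap : ∀ p ∈ P, Prod.swap p ∉ P) :
    (LinearIndependent ℝ (fun p : P => molecule n d p.1.1 p.1.2) ∧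
        Submodule.span ℝ (Set.range (fun p : P => molecule n d p.1.1 p.1.2)) = ⊤) ↔
      ((SimpleGraph.fromRel (fun i j => (i, j) ∈ P)).Connected ∧
        (SimpleGraph.fromRel (fun i j => (i, j) ∈ P)).IsAcyclic) :=
  stmt5_general n d hpos P hPne hPswap
end

section
/- Let M = {a_0,...,a_n} be a finite pointed metric space with canonical graph G = (M, E, d). Define ∂ : ℝ^E → ℝ^n by ∂χ_e = m_e (extended linearly), after fixing an orientation of each edge. Then for every φ in the span of the molecules, the Lipschitz-free norm satisfies ‖φ‖_{F(M)} = inf{ ‖f‖_1 : f ∈ ℝ^E, ∂f = φ }, i.e., F(M) is isometric to the quotient ℓ_1(E)/Ker ∂. -/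
noncomputable def freeBall (n : ℕ) (d : Fin (n + 1) → Fin (n + 1) → ℝ) :
    Set (Fin n → ℝ) :=
  convexHull ℝ {x | ∃ i j : Fin (n + 1), i ≠ j ∧ x = molecule n d i j}

open scoped Pointwise
open Finset

section BoundaryBall

variable {ι V : Type*} [AddCommGroup V] [Module ℝ V] (P : Finset ι) (v : ι → V)

def boundaryBall : Set V :=
  {x | ∃ f : ι → ℝ, (∀ p ∉ P, f p = 0) ∧ ∑ p ∈ P, f p • v p = x ∧ ∑ p ∈ P, |f p| ≤ 1}

variable {P v}

theorem convex_boundaryBall : Convex ℝ (boundaryBall P v) := by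
  rintro _ ⟨f, hf0, rfl, hf1⟩ _ ⟨g, hg0, rfl, hg1⟩ a b ha hb hab
  refine ⟨a • f + b • g, fun p hp => by simp [hf0 p hp, hg0 p hp], ?_, ?_⟩
  · simp only [Pi.add_apply, Pi.smul_apply, add_smul, smul_assoc, sum_add_distrib, smul_sum]
  · calc ∑ p ∈ P, |a * f p + b * g p|
        ≤ ∑ p ∈ P, (a * |f p| + b * |g p|) := sum_le_sum fun p _ => by
          simpa only [abs_mul, abs_of_nonneg ha, abs_of_nonneg hb]
            using abs_add_le (a * f p) (b * g p)
      _ = a * ∑ p ∈ P, |f p| + b * ∑ p ∈ P, |g p| := by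
          rw [sum_add_distrib, mul_sum, mul_sum]
      _ ≤ 1 := by nlinarith

theorem neg_mem_boundaryBall {x : V} (hx : x ∈ boundaryBall P v) : -x ∈ boundaryBall P v := by
  obtain ⟨f, hf0, rfl, hf1⟩ := hx
  exact ⟨-f, fun p hp => by simp [hf0 p hp], by simp [sum_neg_distrib], by simpa using hf1⟩

theorem mem_boundaryBall_of_mem [DecidableEq ι] {p : ι} (hp : p ∈ P) :
    v p ∈ boundaryBall P v := by
  refine ⟨Pi.single p 1, fun q hq => Pi.single_eq_of_ne (by rintro rfl; exact hq hp) _, ?_, ?_⟩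
  · simp [Pi.single_apply, hp]
  · simp [Pi.single_apply, apply_ite abs, hp]

variable {s : Set V}

theorem sum_smul_mem_smul_convexHull (hvs : ∀ p ∈ P, v p ∈ s ∧ -v p ∈ s) {f : ι → ℝ}
    (hf : 0 < ∑ p ∈ P, |f p|) : ∑ p ∈ P, f p • v p ∈ (∑ p ∈ P, |f p|) • convexHull ℝ s := by
  set r := ∑ p ∈ P, |f p|
  have hsign : ∀ p, f p • v p = |f p| • (if 0 ≤ f p then v p else -v p) := fun p => by
    split_ifs with h
    · rw [abs_of_nonneg h]
    · rw [abs_of_neg (not_le.mp h), smul_neg, neg_smul, neg_neg]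
  refine ⟨r⁻¹ • ∑ p ∈ P, f p • v p, ?_, smul_inv_smul₀ hf.ne' _⟩
  rw [smul_sum]
  simp only [hsign, smul_smul]
  refine (convex_convexHull ℝ s).sum_mem (fun p _ => by positivity) ?_ fun p hp => ?_
  · rw [← mul_sum, inv_mul_cancel₀ hf.ne']
  · split_ifs
    exacts [subset_convexHull ℝ s (hvs p hp).1, subset_convexHull ℝ s (hvs p hp).2]

theorem exists_sum_smul_eq_of_mem_smul_convexHull (hs : s ⊆ boundaryBall P v) {b : ℝ}
    (hb : 0 ≤ b) {x : V} (hx : x ∈ b • convexHull ℝ s) :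
    ∃ f : ι → ℝ, (∀ p ∉ P, f p = 0) ∧ ∑ p ∈ P, f p • v p = x ∧ ∑ p ∈ P, |f p| ≤ b := by
  obtain ⟨_, hy, rfl⟩ := hx
  obtain ⟨g, hg0, rfl, hg1⟩ := convexHull_min hs convex_boundaryBall hy
  refine ⟨b • g, fun p hp => by simp [hg0 p hp], ?_, ?_⟩
  · simp only [Pi.smul_apply, smul_assoc, ← smul_sum]
  · simpa only [Pi.smul_apply, smul_eq_mul, abs_mul, abs_of_nonneg hb, ← mul_sum]
      using mul_le_of_le_one_right hb hg1

theorem gauge_convexHull_eq_sInf (hvs : ∀ p ∈ P, v p ∈ s ∧ -v p ∈ s)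
    (hs : s ⊆ boundaryBall P v) (x : V) :
    gauge (convexHull ℝ s) x = sInf {r : ℝ | ∃ f : ι → ℝ, (∀ p ∉ P, f p = 0) ∧
      ∑ p ∈ P, f p • v p = x ∧ r = ∑ p ∈ P, |f p|} := by
  rcases eq_or_ne x 0 with rfl | hx
  · rw [gauge_zero, eq_comm]
    refine IsLeast.csInf_eq ⟨⟨0, fun _ _ => rfl, by simp, by simp⟩, ?_⟩
    rintro _ ⟨f, -, -, rfl⟩
    positivity
  rw [gauge_def]
  refine csInf_eq_csInf_of_forall_exists_le ?_ ?_
  · rintro b ⟨hb, hbx⟩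
    obtain ⟨f, hf0, hfx, hfb⟩ := exists_sum_smul_eq_of_mem_smul_convexHull hs (le_of_lt hb) hbx
    exact ⟨_, ⟨f, hf0, hfx, rfl⟩, hfb⟩
  · rintro _ ⟨f, -, rfl, rfl⟩
    obtain ⟨p, hp, hfp⟩ := exists_ne_zero_of_sum_ne_zero hx
    have hf : 0 < ∑ p ∈ P, |f p| :=
      sum_pos' (fun _ _ => abs_nonneg _) ⟨p, hp, abs_pos.mpr (left_ne_zero_of_smul hfp)⟩
    exact ⟨_, ⟨hf, sum_smul_mem_smul_convexHull hvs hf⟩, le_rfl⟩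

end BoundaryBall

section Molecule

variable {n : ℕ} {d : Fin (n + 1) → Fin (n + 1) → ℝ}

theorem molecule_swap (hsymm : ∀ i j, d i j = d j i) (i j : Fin (n + 1)) :
    molecule n d j i = -molecule n d i j := by
  rw [molecule, molecule, hsymm j i, ← smul_neg, neg_sub]

theorem molecule_eq_add {i j k : Fin (n + 1)} (hik : d i k ≠ 0) (hkj : d k j ≠ 0) :
    molecule n d i j =
      (d i k / d i j) • molecule n d i k + (d k j / d i j) • molecule n d k j := by
  simp only [molecule, smul_smul, div_mul_eq_mul_div, mul_inv_cancel₀ hik,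
    mul_inv_cancel₀ hkj, ← smul_add, sub_add_sub_cancel, one_div]

theorem molecule_mem_boundaryBall (hsymm : ∀ i j, d i j = d j i)
    (hpos : ∀ i j, i ≠ j → 0 < d i j) (htri : ∀ i j k, d i k ≤ d i j + d j k)
    {P : Finset (Fin (n + 1) × Fin (n + 1))}
    (hP : ∀ i j : Fin (n + 1), i ≠ j →
      (((i, j) ∈ P ∨ (j, i) ∈ P) ↔ ∀ k, k ≠ i → k ≠ j → d i j < d i k + d k j))
    {i j : Fin (n + 1)} (hij : i ≠ j) :
    molecule n d i j ∈ boundaryBall P fun p => molecule n d p.1 p.2 := by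
  have hwf : WellFounded fun p q : Fin (n + 1) × Fin (n + 1) => d p.1 p.2 < d q.1 q.2 :=
    @Finite.wellFounded_of_trans_of_irrefl _ _ _ ⟨fun _ _ _ => lt_trans⟩ ⟨fun _ => lt_irrefl _⟩
  suffices ∀ p : Fin (n + 1) × Fin (n + 1), p.1 ≠ p.2 →
      molecule n d p.1 p.2 ∈ boundaryBall P fun p => molecule n d p.1 p.2 from this (i, j) hij
  intro p
  induction p using hwf.induction with | _ p ih => ?_
  obtain ⟨i, j⟩ := p
  intro hij
  by_cases hedge : (i, j) ∈ P ∨ (j, i) ∈ P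
  · rcases hedge with hedge | hedge
    · exact mem_boundaryBall_of_mem hedge
    · rw [molecule_swap hsymm j i]
      exact neg_mem_boundaryBall (mem_boundaryBall_of_mem hedge)
  obtain ⟨k, hki, hkj, hle⟩ : ∃ k, k ≠ i ∧ k ≠ j ∧ d i k + d k j ≤ d i j := by
    simpa using (hP i j hij).not.mp hedge
  have hik := hpos i k hki.symm
  have hkj' := hpos k j hkj
  have hij' := hpos i j hij
  have heq : d i j = d i k + d k j := le_antisymm (htri i k j) hle
  rw [molecule_eq_add hik.ne' hkj'.ne']
  refine convex_boundaryBall (ih (i, k) (by dsimp only; linarith) hki.symm)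
    (ih (k, j) (by dsimp only; linarith) hkj) (by positivity) (by positivity) ?_
  rw [← add_div, ← heq, div_self hij'.ne']

end Molecule

theorem stmt8_general (n : ℕ) (d : Fin (n + 1) → Fin (n + 1) → ℝ)
    (hsymm : ∀ i j, d i j = d j i)
    (hpos : ∀ i j, i ≠ j → 0 < d i j)
    (htri : ∀ i j k, d i k ≤ d i j + d j k)
    -- `P` is the set of edges of the canonical graph, each with a fixed orientation
    (P : Finset (Fin (n + 1) × Fin (n + 1)))
    (hPne : ∀ p ∈ P, p.1 ≠ p.2)
    (hP : ∀ i j : Fin (n + 1), i ≠ j →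
      (((i, j) ∈ P ∨ (j, i) ∈ P) ↔ ∀ k, k ≠ i → k ≠ j → d i j < d i k + d k j)) :
    ∀ φ : Fin n → ℝ,
      φ ∈ Submodule.span ℝ {x | ∃ p ∈ P, x = molecule n d p.1 p.2} →
      gauge (freeBall n d) φ =
        sInf {r : ℝ | ∃ f : Fin (n + 1) × Fin (n + 1) → ℝ,
          (∀ p ∉ P, f p = 0) ∧
          (∑ p ∈ P, f p • molecule n d p.1 p.2) = φ ∧
          r = ∑ p ∈ P, |f p|} := by
  intro φ _
  refine gauge_convexHull_eq_sInf (fun p hp => ⟨?_, ?_⟩) ?_ φ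
  · exact ⟨p.1, p.2, hPne p hp, rfl⟩
  · exact ⟨p.2, p.1, (hPne p hp).symm, (molecule_swap hsymm p.1 p.2).symm⟩
  · rintro _ ⟨i, j, hij, rfl⟩
    exact molecule_mem_boundaryBall hsymm hpos htri hP hij

theorem stmt8 (n : ℕ) (d : Fin (n + 1) → Fin (n + 1) → ℝ)
    (hsymm : ∀ i j, d i j = d j i) (hzero : ∀ i, d i i = 0)
    (hpos : ∀ i j, i ≠ j → 0 < d i j)
    (htri : ∀ i j k, d i k ≤ d i j + d j k)
    -- `P` is the set of edges of the canonical graph, each with a fixed orientation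
    (P : Finset (Fin (n + 1) × Fin (n + 1)))
    (hPne : ∀ p ∈ P, p.1 ≠ p.2)
    (hPswap : ∀ p ∈ P, Prod.swap p ∉ P)
    (hP : ∀ i j : Fin (n + 1), i ≠ j →
      (((i, j) ∈ P ∨ (j, i) ∈ P) ↔ ∀ k, k ≠ i → k ≠ j → d i j < d i k + d k j)) :
    ∀ φ : Fin n → ℝ,
      φ ∈ Submodule.span ℝ {x | ∃ p ∈ P, x = molecule n d p.1 p.2} →
      gauge (freeBall n d) φ =
        sInf {r : ℝ | ∃ f : Fin (n + 1) × Fin (n + 1) → ℝ,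
          (∀ p ∉ P, f p = 0) ∧
          (∑ p ∈ P, f p • molecule n d p.1 p.2) = φ ∧
          r = ∑ p ∈ P, |f p|} :=
  stmt8_general n d hsymm hpos htri P hPne hP
end

section
/- Let M be a finite metric space and suppose there is a face F of the polytope B_{F(M)} (i.e., the intersection of B_{F(M)} with a supporting hyperplane) containing both molecules m_{i,j} and m_{j,k}. Then d_{i,j} + d_{j,k} ≤ d_{i,k}, hence d_{i,k} = d_{i,j} + d_{j,k}, and m_{i,k} is not an extreme point of B_{F(M)}. -/
/-!
Testing `f` on `m_{i,k}` and using `f(a_i) - f(a_k) = d_{i,j} + d_{j,k}` gives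
`d_{i,j} + d_{j,k} ≤ d_{i,k}`; with the triangle inequality this is an equality. Then
`m_{i,k} = (d_{i,j} / d_{i,k}) m_{i,j} + (d_{j,k} / d_{i,k}) m_{j,k}` lies strictly inside the
segment `[m_{i,j}, m_{j,k}]` of `B_{F(M)}`, and these endpoints differ from `m_{i,k}`, as the
Lipschitz function `1_{a_j}` tells apart.
-/

section Molecule

variable {n : ℕ} (d : Fin (n + 1) → Fin (n + 1) → ℝ)

/-- Duality `⟨g - g(a_0), x⟩` of `Lip₀(M)` with `F(M)`: coordinate `p` of `ℝⁿ` is the point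
`a_{p+1}`, and `e_0 = 0`. -/
lemma sum_sub_mul_stdVec (g : Fin (n + 1) → ℝ) (u : Fin (n + 1)) :
    ∑ p : Fin n, (g p.succ - g 0) * stdVec n u p = g u - g 0 := by
  induction u using Fin.cases with
  | zero => simp [stdVec]
  | succ q => simp [stdVec, Fin.val_inj]

lemma sum_sub_mul_molecule (g : Fin (n + 1) → ℝ) (u v : Fin (n + 1)) :
    ∑ p : Fin n, (g p.succ - g 0) * molecule n d u v p = (g u - g v) / d u v := by
  simp only [molecule, Pi.smul_apply, Pi.sub_apply, smul_eq_mul, mul_left_comm _ (d u v)⁻¹,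
    mul_sub, ← Finset.mul_sum, Finset.sum_sub_distrib, sum_sub_mul_stdVec]
  ring

lemma molecule_mem_freeBall {u v : Fin (n + 1)} (huv : u ≠ v) :
    molecule n d u v ∈ freeBall n d :=
  subset_convexHull ℝ _ ⟨u, v, huv, rfl⟩

lemma molecule_ne_molecule {i j k : Fin (n + 1)} (hij : i ≠ j) (hjk : j ≠ k)
    (hdij : d i j ≠ 0) : molecule n d i j ≠ molecule n d i k := by
  intro h
  let g : Fin (n + 1) → ℝ := fun u => if u = j then 1 else 0
  have hpair : (g i - g j) / d i j = (g i - g k) / d i k := by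
    rw [← sum_sub_mul_molecule, ← sum_sub_mul_molecule, h]
  simp [g, hij, hjk.symm, hdij] at hpair

lemma molecule_mem_openSegment {i j k : Fin (n + 1)} (hdij : 0 < d i j) (hdjk : 0 < d j k)
    (hdik : d i k = d i j + d j k) :
    molecule n d i k ∈ openSegment ℝ (molecule n d i j) (molecule n d j k) := by
  have hdik_pos : 0 < d i k := hdik ▸ add_pos hdij hdjk
  refine ⟨d i j / d i k, d j k / d i k, by positivity, by positivity, ?_, ?_⟩
  · rw [← add_div, ← hdik, div_self hdik_pos.ne']
  · have hcoeff (a : ℝ) (ha : a ≠ 0) : a / d i k * a⁻¹ = (d i k)⁻¹ := by field_simp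
    simp only [molecule, smul_smul, hcoeff _ hdij.ne', hcoeff _ hdjk.ne', ← smul_add,
      sub_add_sub_cancel]

lemma molecule_not_mem_extremePoints {i j k : Fin (n + 1)} (hij : i ≠ j) (hjk : j ≠ k)
    (hdij : 0 < d i j) (hdjk : 0 < d j k) (hdik : d i k = d i j + d j k) :
    molecule n d i k ∉ (freeBall n d).extremePoints ℝ := fun hext =>
  molecule_ne_molecule d hij hjk hdij.ne' <|
    hext.2 (molecule_mem_freeBall d hij) (molecule_mem_freeBall d hjk)
      (molecule_mem_openSegment d hdij hdjk hdik)

end Molecule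

theorem stmt16_general (n : ℕ) (d : Fin (n + 1) → Fin (n + 1) → ℝ)
    (hpos : ∀ i j, i ≠ j → 0 < d i j)
    (htri : ∀ i j k, d i k ≤ d i j + d j k)
    (i j k : Fin (n + 1)) (hij : i ≠ j) (hjk : j ≠ k) (hik : i ≠ k)
    -- `f` is a `1`-Lipschitz functional exposing a face containing `m_{i,j}` and `m_{j,k}`
    (f : Fin (n + 1) → ℝ)
    (hLip : ∀ u v, u ≠ v → f u - f v ≤ d u v)
    (h1 : f i - f j = d i j) (h2 : f j - f k = d j k) :
    d i j + d j k ≤ d i k ∧ d i k = d i j + d j k ∧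
      molecule n d i k ∉ (freeBall n d).extremePoints ℝ := by
  have hle : d i j + d j k ≤ d i k := by linarith [hLip i k hik]
  have heq : d i k = d i j + d j k := le_antisymm (htri i j k) hle
  exact ⟨hle, heq,
    molecule_not_mem_extremePoints d hij hjk (hpos i j hij) (hpos j k hjk) heq⟩

theorem stmt16 (n : ℕ) (d : Fin (n + 1) → Fin (n + 1) → ℝ)
    (hsymm : ∀ i j, d i j = d j i) (hzero : ∀ i, d i i = 0)
    (hpos : ∀ i j, i ≠ j → 0 < d i j)
    (htri : ∀ i j k, d i k ≤ d i j + d j k)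
    (i j k : Fin (n + 1)) (hij : i ≠ j) (hjk : j ≠ k) (hik : i ≠ k)
    -- `f` is a `1`-Lipschitz functional exposing a face containing `m_{i,j}` and `m_{j,k}`
    (f : Fin (n + 1) → ℝ) (hf0 : f 0 = 0)
    (hLip : ∀ u v, u ≠ v → f u - f v ≤ d u v)
    (h1 : f i - f j = d i j) (h2 : f j - f k = d j k) :
    d i j + d j k ≤ d i k ∧ d i k = d i j + d j k ∧
      molecule n d i k ∉ (freeBall n d).extremePoints ℝ :=
  stmt16_general n d hpos htri i j k hij hjk hik f hLip h1 h2
end
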